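/- arXiv:1604.06615 — 2 statements merged into one kernel-verified Lean document; each statement's English description precedes it below -/
import Mathlib

section
/- For any unit norm frame of M vectors in R^m with M > m, the coherence (maximum absolute inner product between distinct vectors) is at least sqrt((M-m)/(m(M-1))). -/
/-!
Let `A` be the `M × m` matrix with rows `φ i`. The Gram matrix `A Aᵀ` and the frame operator
`Aᵀ A` have the same Frobenius norm, since both squared norms equal `tr (A Aᵀ A Aᵀ)`. The frame
operator has trace `M`, so Cauchy–Schwarz on its diagonal bounds its squared Frobenius norm below by
`M² / m`, while unit norms and coherence `μ` bound that of the Gram matrix above by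
`M (1 + (M - 1) μ²)`. Comparing the two gives the bound on `μ²`.
-/

open Matrix BigOperators Finset

noncomputable def coherence {m M : ℕ} (φ : Fin M → (Fin m → ℝ)) : ℝ :=
  sSup {r : ℝ | ∃ i j : Fin M, i ≠ j ∧ r = |∑ k, φ i k * φ j k|}

namespace Matrix

variable {ι n : Type*} [Fintype ι] [Fintype n]

theorem sum_sq_eq_trace_mul_transpose (X : Matrix ι n ℝ) :
    ∑ i, ∑ j, X i j ^ 2 = trace (X * Xᵀ) := by
  simp [trace, mul_apply, sq]

theorem sum_sq_mul_transpose_eq_sum_sq_transpose_mul (A : Matrix ι n ℝ) :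
    ∑ i, ∑ j, (A * Aᵀ) i j ^ 2 = ∑ k, ∑ l, (Aᵀ * A) k l ^ 2 := by
  simp only [sum_sq_eq_trace_mul_transpose, transpose_mul, transpose_transpose]
  rw [Matrix.mul_assoc, trace_mul_comm A]
  simp only [Matrix.mul_assoc]

theorem sq_trace_le_card_mul_sum_sq (S : Matrix n n ℝ) :
    trace S ^ 2 ≤ Fintype.card n * ∑ k, ∑ l, S k l ^ 2 :=
  calc trace S ^ 2 ≤ Fintype.card n * ∑ k, S k k ^ 2 := sq_sum_le_card_mul_sum_sq
    _ ≤ Fintype.card n * ∑ k, ∑ l, S k l ^ 2 := by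
      gcongr with k
      exact single_le_sum (fun l _ => sq_nonneg (S k l)) (mem_univ k)

end Matrix

section Frame

variable {ι n : Type*} [Fintype ι] [Fintype n]

theorem sq_sum_dotProduct_self_le_card_mul_sum_sq (v : ι → n → ℝ) :
    (∑ i, v i ⬝ᵥ v i) ^ 2 ≤ Fintype.card n * ∑ i, ∑ j, (v i ⬝ᵥ v j) ^ 2 := by
  have h := sq_trace_le_card_mul_sum_sq ((of v)ᵀ * of v)
  rwa [trace_mul_comm, ← sum_sq_mul_transpose_eq_sum_sq_transpose_mul] at h

theorem sum_sq_dotProduct_le_of_abs_le {v : ι → n → ℝ} {μ : ℝ} (hunit : ∀ i, v i ⬝ᵥ v i = 1)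
    (hμ : ∀ i j, i ≠ j → |v i ⬝ᵥ v j| ≤ μ) :
    ∑ i, ∑ j, (v i ⬝ᵥ v j) ^ 2 ≤ Fintype.card ι * (1 + (Fintype.card ι - 1) * μ ^ 2) := by
  classical
  have hrow : ∀ i, ∑ j, (v i ⬝ᵥ v j) ^ 2 ≤ 1 + (Fintype.card ι - 1) * μ ^ 2 := by
    intro i
    rw [← add_sum_erase _ _ (mem_univ i), hunit i, one_pow]
    gcongr
    calc ∑ j ∈ univ.erase i, (v i ⬝ᵥ v j) ^ 2 ≤ #(univ.erase i) • μ ^ 2 := by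
          refine sum_le_card_nsmul _ _ _ fun j hj => ?_
          rw [← sq_abs]
          exact pow_le_pow_left₀ (abs_nonneg _) (hμ i j (ne_of_mem_erase hj).symm) 2
      _ = (Fintype.card ι - 1) * μ ^ 2 := by
          rw [card_erase_of_mem (mem_univ i), card_univ, nsmul_eq_mul,
            Nat.cast_pred (Fintype.card_pos_iff.2 ⟨i⟩)]
  calc ∑ i, ∑ j, (v i ⬝ᵥ v j) ^ 2 ≤ ∑ _i : ι, (1 + (Fintype.card ι - 1) * μ ^ 2) :=
        sum_le_sum fun i _ => hrow i
    _ = Fintype.card ι * (1 + (Fintype.card ι - 1) * μ ^ 2) := by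
        rw [sum_const, card_univ, nsmul_eq_mul]

end Frame

section Coherence

variable {m M : ℕ} (φ : Fin M → (Fin m → ℝ))

theorem coherence_nonneg : 0 ≤ coherence φ :=
  Real.sSup_nonneg fun _ ⟨_, _, _, hr⟩ => hr ▸ abs_nonneg _

theorem abs_dotProduct_le_coherence {i j : Fin M} (hij : i ≠ j) : |φ i ⬝ᵥ φ j| ≤ coherence φ := by
  refine le_csSup ?_ ⟨i, j, hij, rfl⟩
  refine ((Set.finite_range fun p : Fin M × Fin M => |φ p.1 ⬝ᵥ φ p.2|).subset ?_).bddAbove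
  rintro r ⟨i, j, -, rfl⟩
  exact ⟨(i, j), rfl⟩

end Coherence

theorem welch_bound_general {m M : ℕ} (hm : 0 < m) (hMm : m < M)
    (φ : Fin M → (Fin m → ℝ))
    (hunit : ∀ i, ∑ k, φ i k * φ i k = 1) :
    Real.sqrt (((M : ℝ) - m) / (m * ((M : ℝ) - 1))) ≤ coherence φ := by
  have hlower := sq_sum_dotProduct_self_le_card_mul_sum_sq φ
  have hupper := sum_sq_dotProduct_le_of_abs_le hunit fun i j => abs_dotProduct_le_coherence φ
  simp only [show ∀ i, φ i ⬝ᵥ φ i = 1 from hunit, sum_const, card_univ, Fintype.card_fin,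
    nsmul_eq_mul, mul_one] at hlower hupper
  have hm' : (0 : ℝ) < m := by exact_mod_cast hm
  have hM : (1 : ℝ) < M := by exact_mod_cast (show 1 < M by omega)
  have hM_le_potential : (M : ℝ) ≤ m * (1 + (M - 1) * coherence φ ^ 2) := by
    refine le_of_mul_le_mul_left ?_ (by linarith : (0 : ℝ) < M)
    nlinarith [mul_le_mul_of_nonneg_left hupper hm'.le]
  have hμsq : ((M : ℝ) - m) / (m * ((M : ℝ) - 1)) ≤ coherence φ ^ 2 := by
    rw [div_le_iff₀ (mul_pos hm' (by linarith))]
    linarith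
  rw [← Real.sqrt_sq (coherence_nonneg φ)]
  exact Real.sqrt_le_sqrt hμsq

/-- Welch bound: any unit-norm frame of `M > m` vectors spanning `ℝ^m` has
coherence at least `√((M-m)/(m(M-1)))`. -/
theorem welch_bound {m M : ℕ} (hm : 0 < m) (hMm : m < M)
    (φ : Fin M → (Fin m → ℝ))
    (hunit : ∀ i, ∑ k, φ i k * φ i k = 1)
    (hspan : Submodule.span ℝ (Set.range φ) = ⊤) :
    Real.sqrt (((M : ℝ) - m) / (m * ((M : ℝ) - 1))) ≤ coherence φ :=
  welch_bound_general hm hMm φ hunit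
end

section
/- Let Φ be a unit norm frame in R^m and G an invertible m×m matrix. Let {e_j} be an orthonormal eigenbasis of GᵀG with eigenvalues λ_j. Then ‖Gφᵢ‖₂ = 1 for all i if and only if the vector (λ₁−1, …, λ_m−1) is orthogonal to the span of the vectors (|⟨φᵢ, e₁⟩|², …, |⟨φᵢ, e_m⟩|²) for i = 1,…,M. -/
open Matrix BigOperators Finset

/-!
In the orthonormal eigenbasis `e` of `GᵀG`, `‖Gφ‖² = φ ⬝ᵥ GᵀG φ = ∑ⱼ λⱼ ⟨φ, eⱼ⟩²`, while Parseval
gives `1 = ‖φ‖² = ∑ⱼ ⟨φ, eⱼ⟩²`. Hence `‖Gφᵢ‖² - 1` is the dot product of `(λⱼ - 1)ⱼ` with the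
`i`-th generator `(⟨φᵢ, eⱼ⟩²)ⱼ`, and a linear functional vanishes on a span iff it vanishes on
the generators.
-/

namespace Matrix

theorem mulVec_dotProduct_mulVec_self {m n : Type*} [Fintype m] [Fintype n] {R : Type*}
    [CommSemiring R] (G : Matrix m n R) (x : n → R) :
    G *ᵥ x ⬝ᵥ G *ᵥ x = x ⬝ᵥ (Gᵀ * G) *ᵥ x := by
  rw [← mulVec_mulVec, dotProduct_mulVec x Gᵀ, vecMul_transpose]

theorem sum_mul_apply_mul_self {l m n : Type*} [Fintype m] [Fintype l] {R : Type*}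
    [CommSemiring R] (G : Matrix l m R) (Φ : Matrix m n R) (i : n) :
    ∑ k, (G * Φ) k i * (G * Φ) k i = G *ᵥ Φᵀ i ⬝ᵥ G *ᵥ Φᵀ i :=
  rfl

theorem forall_mem_span_dotProduct_eq_zero_iff {n R : Type*} [Fintype n] [CommSemiring R]
    (w : n → R) (s : Set (n → R)) :
    (∀ v ∈ Submodule.span R s, w ⬝ᵥ v = 0) ↔ ∀ v ∈ s, w ⬝ᵥ v = 0 :=
  LinearMap.eqOn_span_iff (f := dotProductBilin R R w) (g := 0)

section Orthonormal

variable {n : Type*} [Fintype n] [DecidableEq n] {e : n → n → ℝ}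

theorem transpose_mul_self_of_orthonormal_rows
    (horth : ∀ j j', e j ⬝ᵥ e j' = if j = j' then 1 else 0) : (of e)ᵀ * of e = 1 :=
  mul_eq_one_comm.mp <| ext fun j j' => by rw [one_apply]; exact horth j j'

theorem sum_dotProduct_smul_of_orthonormal
    (horth : ∀ j j', e j ⬝ᵥ e j' = if j = j' then 1 else 0) (x : n → ℝ) :
    ∑ j, (x ⬝ᵥ e j) • e j = x := by
  calc ∑ j, (x ⬝ᵥ e j) • e j = (of e)ᵀ *ᵥ (of e *ᵥ x) := by
        rw [mulVec_transpose, vecMul_eq_sum]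
        exact sum_congr rfl fun j _ => by rw [dotProduct_comm]; rfl
    _ = x := by rw [mulVec_mulVec, transpose_mul_self_of_orthonormal_rows horth, one_mulVec]

theorem dotProduct_mulVec_eq_sum_eigenvalues
    (horth : ∀ j j', e j ⬝ᵥ e j' = if j = j' then 1 else 0) {A : Matrix n n ℝ} {μ : n → ℝ}
    (heig : ∀ j, A *ᵥ e j = μ j • e j) (x : n → ℝ) :
    x ⬝ᵥ A *ᵥ x = ∑ j, μ j * (x ⬝ᵥ e j) ^ 2 := by
  calc x ⬝ᵥ A *ᵥ x = x ⬝ᵥ A *ᵥ ∑ j, (x ⬝ᵥ e j) • e j := by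
        rw [sum_dotProduct_smul_of_orthonormal horth]
    _ = ∑ j, μ j * (x ⬝ᵥ e j) ^ 2 := by
        simp only [mulVec_sum, mulVec_smul, heig, dotProduct_sum, dotProduct_smul, smul_eq_mul]
        exact sum_congr rfl fun j _ => by ring

theorem dotProduct_self_eq_sum_sq_of_orthonormal
    (horth : ∀ j j', e j ⬝ᵥ e j' = if j = j' then 1 else 0) (x : n → ℝ) :
    x ⬝ᵥ x = ∑ j, (x ⬝ᵥ e j) ^ 2 := by
  simpa using dotProduct_mulVec_eq_sum_eigenvalues horth (A := 1) (μ := 1) (by simp) x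

end Orthonormal

end Matrix

theorem unit_norm_preserving_characterization_general {m M : ℕ}
    (Φ : Matrix (Fin m) (Fin M) ℝ)
    (hunit : ∀ i, ∑ k, Φ k i * Φ k i = 1)
    (G : Matrix (Fin m) (Fin m) ℝ)
    (e : Fin m → (Fin m → ℝ)) (lam : Fin m → ℝ)
    (horth : ∀ j j' : Fin m, e j ⬝ᵥ e j' = if j = j' then 1 else 0)
    (heig : ∀ j, (Gᵀ * G).mulVec (e j) = lam j • e j) :
    (∀ i, ∑ k, (G * Φ) k i * (G * Φ) k i = 1) ↔
      ∀ v ∈ Submodule.span ℝ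
          (Set.range fun i : Fin M => fun j : Fin m => ((fun k => Φ k i) ⬝ᵥ e j) ^ 2),
        ∑ j, (lam j - 1) * v j = 0 := by
  have hgen : ∀ i, ∑ j, (lam j - 1) * (Φᵀ i ⬝ᵥ e j) ^ 2 =
      ∑ k, (G * Φ) k i * (G * Φ) k i - 1 := by
    intro i
    have hφ : Φᵀ i ⬝ᵥ Φᵀ i = 1 := hunit i
    simp only [sub_mul, one_mul, sum_sub_distrib, ← dotProduct_self_eq_sum_sq_of_orthonormal horth,
      hφ, sum_mul_apply_mul_self, mulVec_dotProduct_mulVec_self,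
      dotProduct_mulVec_eq_sum_eigenvalues horth heig]
  have hspan := forall_mem_span_dotProduct_eq_zero_iff (lam - 1)
    (Set.range fun i j => (Φᵀ i ⬝ᵥ e j) ^ 2)
  rw [Set.forall_mem_range] at hspan
  exact (forall_congr' fun i => by rw [← sub_eq_zero, ← hgen i]; rfl).trans hspan.symm

/-- Characterization of preconditioners preserving unit norms: `‖Gφᵢ‖ = 1` for
all `i` iff `(λ₁-1,…,λ_m-1)` is orthogonal to the span of the vectors of squared
coordinates of the `φᵢ` in the eigenbasis of `GᵀG`. -/
theorem unit_norm_preserving_characterization {m M : ℕ}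
    (Φ : Matrix (Fin m) (Fin M) ℝ)
    (hunit : ∀ i, ∑ k, Φ k i * Φ k i = 1)
    (G : Matrix (Fin m) (Fin m) ℝ) (hG : IsUnit G)
    (e : Fin m → (Fin m → ℝ)) (lam : Fin m → ℝ)
    (horth : ∀ j j' : Fin m, e j ⬝ᵥ e j' = if j = j' then 1 else 0)
    (heig : ∀ j, (Gᵀ * G).mulVec (e j) = lam j • e j) :
    (∀ i, ∑ k, (G * Φ) k i * (G * Φ) k i = 1) ↔
      ∀ v ∈ Submodule.span ℝ
          (Set.range fun i : Fin M => fun j : Fin m => ((fun k => Φ k i) ⬝ᵥ e j) ^ 2),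
        ∑ j, (lam j - 1) * v j = 0 :=
  unit_norm_preserving_characterization_general Φ hunit G e lam horth heig
end
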